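/- arXiv:2210.11362 — 2 statements merged into one kernel-verified Lean document; each statement's English description precedes it below -/
import Mathlib

section
/- Let m ≥ 2 and let A_k ∈ ℝ^{L_k×J_k×L_{k+1}} for k = 1,…,m be 3rd-order tensors with matching link dimensions, and let M_k ∈ ℝ^{P_k×J_k} be matrices. Then (A_1 ×_2 M_1) ⊠_2 (A_2 ×_2 M_2) ⊠_2 ⋯ ⊠_2 (A_m ×_2 M_m) = (A_1 ⊠_2 A_2 ⊠_2 ⋯ ⊠_2 A_m) ×_2 (M_m ⊗ M_{m−1} ⊗ ⋯ ⊗ M_1). -/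
noncomputable section

/-- Mode-2 subchain product `A ⊠₂ B` of a tensor `A` (with third dimension `K`) and a
tensor `B` (with first dimension `K`), where `A` has middle (mode-2) dimension `J1`.
The middle index is linearized with the first factor's index varying fastest:
`(A ⊠₂ B)(i, overline{j₁ j₂}, k) = ∑_t A(i, j₁, t) B(t, j₂, k)` (0-based). -/
def sub2 (K J1 : ℕ) (A B : ℕ → ℕ → ℕ → ℝ) : ℕ → ℕ → ℕ → ℝ :=
  fun i j k => ∑ t ∈ Finset.range K, A i (j % J1) t * B t (j / J1) k

/-- `subChain J L A t = A 0 ⊠₂ A 1 ⊠₂ ⋯ ⊠₂ A t` (left-to-right iterated mode-2 subchain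
products), where `A k` is an `L k × J k × L (k+1)` tensor. -/
def subChain (J L : ℕ → ℕ) (A : ℕ → ℕ → ℕ → ℕ → ℝ) : ℕ → ℕ → ℕ → ℕ → ℝ
  | 0 => A 0
  | t + 1 => sub2 (L (t + 1)) (∏ k ∈ Finset.range (t + 1), J k) (subChain J L A t) (A (t + 1))

/-- Mode-2 tensor-times-matrix product: `(X ×₂ U)(i, r, k) = ∑_{j<J} X(i, j, k) U(r, j)`. -/
def ttm2 (J : ℕ) (X : ℕ → ℕ → ℕ → ℝ) (U : ℕ → ℕ → ℝ) : ℕ → ℕ → ℕ → ℝ :=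
  fun i r k => ∑ j ∈ Finset.range J, X i j k * U r j

/-- Kronecker product `A ⊗ B` where `B` is a `p × q` matrix: the indices of the second
factor vary fastest, i.e. `(A ⊗ B)(overline{k i}, overline{l j}) = A(i,j) B(k,l)` (0-based). -/
def kron (p q : ℕ) (A B : ℕ → ℕ → ℝ) : ℕ → ℕ → ℝ :=
  fun i j => A (i / p) (j / q) * B (i % p) (j % q)

/-- `kronChain P Q M t = M t ⊗ M (t-1) ⊗ ⋯ ⊗ M 0`, where `M k` is a `P k × Q k` matrix. -/
def kronChain (P Q : ℕ → ℕ) (M : ℕ → ℕ → ℕ → ℝ) : ℕ → ℕ → ℕ → ℝ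
  | 0 => M 0
  | t + 1 =>
    kron (∏ k ∈ Finset.range (t + 1), P k) (∏ k ∈ Finset.range (t + 1), Q k)
      (M (t + 1)) (kronChain P Q M t)

lemma sum_range_mul (a b : ℕ) (f : ℕ → ℝ) :
    ∑ u ∈ Finset.range (a * b), f u
      = ∑ v ∈ Finset.range b, ∑ w ∈ Finset.range a, f (v * a + w) := by
  induction b with
  | zero => simp
  | succ b ih =>
      rw [Nat.mul_succ, Finset.sum_range_add, ih, Finset.sum_range_succ]
      simp [mul_comm]

lemma sum3_comm (a b c : Finset ℕ) (F : ℕ → ℕ → ℕ → ℝ) :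
    ∑ x ∈ a, ∑ y ∈ b, ∑ z ∈ c, F x y z = ∑ z ∈ c, ∑ y ∈ b, ∑ x ∈ a, F x y z := by
  rw [Finset.sum_comm]
  rw [Finset.sum_congr rfl fun y _ => Finset.sum_comm (s := a) (t := c)]
  rw [Finset.sum_comm]

lemma key (L J P : ℕ → ℕ) (A : ℕ → ℕ → ℕ → ℕ → ℝ) (M : ℕ → ℕ → ℕ → ℝ) :
    ∀ t, ∀ i j k, j < ∏ x ∈ Finset.range (t + 1), P x →
      subChain P L (fun s => ttm2 (J s) (A s) (M s)) t i j k =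
        ttm2 (∏ x ∈ Finset.range (t + 1), J x) (subChain J L A t)
          (kronChain P J M t) i j k := by
  intro t
  induction t with
  | zero => intro i j k hj; simp [subChain, kronChain, ttm2]
  | succ t ih =>
      intro i j k hj
      have hPpos : 0 < ∏ x ∈ Finset.range (t + 1), P x := by
        rcases Nat.eq_zero_or_pos (∏ x ∈ Finset.range (t + 1), P x) with h | h
        · rw [Finset.prod_range_succ, h] at hj; simp at hj
        · exact h
      set Pp := ∏ x ∈ Finset.range (t + 1), P x with hPp
      set Jp := ∏ x ∈ Finset.range (t + 1), J x with hJp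
      have hmod : j % Pp < Pp := Nat.mod_lt _ hPpos
      set C := subChain J L A t with hC
      set Kc := kronChain P J M t with hKc
      have hL : subChain P L (fun s => ttm2 (J s) (A s) (M s)) (t + 1) i j k
          = ∑ s ∈ Finset.range (L (t + 1)),
              (∑ w ∈ Finset.range Jp, C i w s * Kc (j % Pp) w) *
              (∑ v ∈ Finset.range (J (t + 1)), A (t + 1) s v k * M (t + 1) (j / Pp) v) := by
        show ∑ s ∈ Finset.range (L (t + 1)),
            subChain P L (fun s => ttm2 (J s) (A s) (M s)) t i (j % Pp) s *
              (∑ v ∈ Finset.range (J (t + 1)), A (t + 1) s v k * M (t + 1) (j / Pp) v) = _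
        exact Finset.sum_congr rfl fun s _ => by rw [ih i (j % Pp) s hmod]; rfl
      have hR : ttm2 (Jp * J (t + 1)) (subChain J L A (t + 1)) (kronChain P J M (t + 1)) i j k
          = ∑ v ∈ Finset.range (J (t + 1)), ∑ w ∈ Finset.range Jp,
              (∑ s ∈ Finset.range (L (t + 1)), C i w s * A (t + 1) s v k) *
              (M (t + 1) (j / Pp) v * Kc (j % Pp) w) := by
        show ∑ u ∈ Finset.range (Jp * J (t + 1)),
            (∑ s ∈ Finset.range (L (t + 1)), C i (u % Jp) s * A (t + 1) s (u / Jp) k) *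
              (M (t + 1) (j / Pp) (u / Jp) * Kc (j % Pp) (u % Jp)) = _
        rw [sum_range_mul]
        refine Finset.sum_congr rfl fun v _ => Finset.sum_congr rfl fun w hw => ?_
        have hw' := Finset.mem_range.mp hw
        have hJpos : 0 < Jp := by omega
        rw [show (v * Jp + w) % Jp = w from by
              rw [Nat.add_comm, Nat.add_mul_mod_self_right, Nat.mod_eq_of_lt hw'],
            show (v * Jp + w) / Jp = v from by
              rw [Nat.add_comm, Nat.add_mul_div_right _ _ hJpos, Nat.div_eq_of_lt hw',
                Nat.zero_add]]
      rw [show (∏ x ∈ Finset.range (t + 1 + 1), J x) = Jp * J (t + 1) from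
            Finset.prod_range_succ _ _, hL, hR]
      rw [Finset.sum_congr rfl fun s _ =>
            Finset.sum_mul_sum (Finset.range Jp) (Finset.range (J (t + 1)))
              (fun w => C i w s * Kc (j % Pp) w)
              (fun v => A (t + 1) s v k * M (t + 1) (j / Pp) v)]
      rw [sum3_comm]
      simp only [Finset.sum_mul]
      exact Finset.sum_congr rfl fun v _ => Finset.sum_congr rfl fun w _ =>
        Finset.sum_congr rfl fun s _ => by ring

/-- **Iterated subchain product and TTM interchange.**
For tensors `A k ∈ ℝ^{L k × J k × L (k+1)}` (`k = 0, …, m-1`, matching link dimensions)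
and matrices `M k ∈ ℝ^{P k × J k}`:
`(A 0 ×₂ M 0) ⊠₂ ⋯ ⊠₂ (A (m-1) ×₂ M (m-1))
  = (A 0 ⊠₂ ⋯ ⊠₂ A (m-1)) ×₂ (M (m-1) ⊗ ⋯ ⊗ M 0)`,
stated entrywise on the `L 0 × ∏ P k × L m` tensors. -/
theorem iterated_subchain_ttm_kron (m : ℕ) (hm : 2 ≤ m) (L J P : ℕ → ℕ)
    (A : ℕ → ℕ → ℕ → ℕ → ℝ) (M : ℕ → ℕ → ℕ → ℝ) :
    ∀ i j k, i < L 0 → j < ∏ t ∈ Finset.range m, P t → k < L m →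
      subChain P L (fun t => ttm2 (J t) (A t) (M t)) (m - 1) i j k =
        ttm2 (∏ t ∈ Finset.range m, J t) (subChain J L A (m - 1))
          (kronChain P J M (m - 1)) i j k := by
  intro i j k _ hj _
  have hm1 : m - 1 + 1 = m := by omega
  rw [← hm1] at hj ⊢
  exact key L J P A M (m - 1) i j k hj
end
end

section
/- Let N ≥ 3 and let G_j ∈ ℝ^{R_j×I_j×R_{j+1}} for j = 1,…,N with R_{N+1} = R_1 be 3rd-order tensors (TR-cores). Fix n ∈ {1,…,N} and define the subchain tensor G^{≠n} = G_{n+1} ⊠_2 ⋯ ⊠_2 G_N ⊠_2 G_1 ⊠_2 ⋯ ⊠_2 G_{n−1} ∈ ℝ^{R_{n+1} × ∏_{j≠n} I_j × R_n}. For each j ≠ n let P_j = Σ_{i_j=1}^{I_j} G_j(i_j)^T ∘ G_j(i_j)^T ∈ ℝ^{R_{j+1}×R_j×R_{j+1}×R_j}, and let S_n = P_{n−1} ×_{2,4}^{1,3} ⋯ ×_{2,4}^{1,3} P_1 ×_{2,4}^{1,3} P_N ×_{2,4}^{1,3} ⋯ ×_{2,4}^{1,3} P_{n+1}. Then the Gram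 matrix of the mode-2 unfolding of the subchain tensor satisfies (G^{≠n}_{[2]})^T G^{≠n}_{[2]} = S_{n<2>}. -/
noncomputable section

/-- General contracted tensor product of 4th-order tensors:
`(A ×_{2,4}^{1,3} B)(i₁, i₂, r₁, r₂) = ∑_{j<J} ∑_{k<K} A(i₁, j, r₁, k) B(j, i₂, k, r₂)`. -/
def gcon (J K : ℕ) (A B : ℕ → ℕ → ℕ → ℕ → ℝ) : ℕ → ℕ → ℕ → ℕ → ℝ :=
  fun i1 i2 r1 r2 =>
    ∑ j ∈ Finset.range J, ∑ k ∈ Finset.range K, A i1 j r1 k * B j i2 k r2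

/-- `conChain D E P t = P 0 ×_{2,4}^{1,3} P 1 ×_{2,4}^{1,3} ⋯ ×_{2,4}^{1,3} P t`
(left-to-right iterated general contracted products), where the contraction forming the
`(t+1)`-st product is over index ranges `D t` and `E t`. -/
def conChain (D E : ℕ → ℕ) (P : ℕ → ℕ → ℕ → ℕ → ℕ → ℝ) : ℕ → ℕ → ℕ → ℕ → ℕ → ℝ
  | 0 => P 0
  | t + 1 => gcon (D t) (E t) (conChain D E P t) (P (t + 1))

lemma sum_range_mul' (m k : ℕ) (f : ℕ → ℝ) :
    ∑ p ∈ Finset.range (m * k), f p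
      = ∑ q ∈ Finset.range k, ∑ r ∈ Finset.range m, f (r + q * m) := by
  rw [← Finset.sum_product']
  apply Finset.sum_nbij' (fun p => ((p / m : ℕ), (p % m : ℕ)))
    (fun q : ℕ × ℕ => q.2 + q.1 * m)
  · intro p hp
    simp only [Finset.mem_range, Finset.mem_product] at *
    have hm : 0 < m := by
      rcases Nat.eq_zero_or_pos m with h | h
      · simp [h] at hp
      · exact h
    exact ⟨(Nat.div_lt_iff_lt_mul hm).2 (by rw [Nat.mul_comm]; omega), Nat.mod_lt _ hm⟩
  · intro q hq
    simp only [Finset.mem_range, Finset.mem_product] at *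
    calc q.2 + q.1 * m < m + q.1 * m := by omega
    _ = (q.1 + 1) * m := by ring
    _ ≤ k * m := Nat.mul_le_mul_right m (by omega)
    _ = m * k := Nat.mul_comm _ _
  · intro p hp
    simp [Nat.mod_add_div']
  · intro q hq
    simp only [Finset.mem_range, Finset.mem_product] at hq
    have h2 : q.2 < m := hq.2
    have : (0:ℕ) < m := by omega
    simp [Nat.add_mul_div_right _ _ this, Nat.div_eq_of_lt h2,
      Nat.mod_eq_of_lt h2, Nat.add_mul_mod_self_right]
  · intro p hp; simp [Nat.mod_add_div']

lemma sum_swap4 (A B C D : Finset ℕ) (f : ℕ → ℕ → ℕ → ℕ → ℝ) :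
    ∑ u ∈ A, ∑ u' ∈ B, ∑ s ∈ C, ∑ s' ∈ D, f u u' s s'
      = ∑ s ∈ C, ∑ s' ∈ D, ∑ u ∈ A, ∑ u' ∈ B, f u u' s s' := by
  calc ∑ u ∈ A, ∑ u' ∈ B, ∑ s ∈ C, ∑ s' ∈ D, f u u' s s'
      = ∑ u ∈ A, ∑ s ∈ C, ∑ u' ∈ B, ∑ s' ∈ D, f u u' s s' :=
        Finset.sum_congr rfl fun u _ => Finset.sum_comm
    _ = ∑ s ∈ C, ∑ u ∈ A, ∑ u' ∈ B, ∑ s' ∈ D, f u u' s s' := Finset.sum_comm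
    _ = ∑ s ∈ C, ∑ u ∈ A, ∑ s' ∈ D, ∑ u' ∈ B, f u u' s s' :=
        Finset.sum_congr rfl fun s _ => Finset.sum_congr rfl fun u _ => Finset.sum_comm
    _ = ∑ s ∈ C, ∑ s' ∈ D, ∑ u ∈ A, ∑ u' ∈ B, f u u' s s' :=
        Finset.sum_congr rfl fun s _ => Finset.sum_comm

/-- Left-associated chain of "transfer tensors" starting at index `m`. -/
def hchain (D : ℕ → ℕ) (T : ℕ → ℕ → ℕ → ℕ → ℕ → ℝ) (m : ℕ) : ℕ → ℕ → ℕ → ℕ → ℕ → ℝ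
  | 0 => T m
  | t + 1 => fun a c b d => ∑ s ∈ Finset.range (D (m + t + 1)),
      ∑ s' ∈ Finset.range (D (m + t + 1)),
        hchain D T m t a c s s' * T (m + t + 1) s s' b d

lemma hchain_cons (D : ℕ → ℕ) (T : ℕ → ℕ → ℕ → ℕ → ℕ → ℝ) (t : ℕ) :
    ∀ m a c b d, hchain D T m (t + 1) a c b d
      = ∑ s ∈ Finset.range (D (m + 1)), ∑ s' ∈ Finset.range (D (m + 1)),
          T m a c s s' * hchain D T (m + 1) t s s' b d := by
  induction t with
  | zero =>
    intro m a c b d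
    simp [hchain]
  | succ t ih =>
    intro m a c b d
    show ∑ u ∈ Finset.range (D (m + (t+1) + 1)), ∑ u' ∈ Finset.range (D (m + (t+1) + 1)),
        hchain D T m (t+1) a c u u' * T (m + (t+1) + 1) u u' b d = _
    have hstep : ∀ u u', hchain D T m (t+1) a c u u'
        = ∑ s ∈ Finset.range (D (m + 1)), ∑ s' ∈ Finset.range (D (m + 1)),
            T m a c s s' * hchain D T (m + 1) t s s' u u' := fun u u' => ih m a c u u'
    simp only [hstep, Finset.sum_mul]
    rw [sum_swap4]
    refine Finset.sum_congr rfl fun s _ => Finset.sum_congr rfl fun s' _ => ?_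
    rw [show hchain D T (m+1) (t+1) s s' b d
        = ∑ u ∈ Finset.range (D (m + 1 + t + 1)), ∑ u' ∈ Finset.range (D (m + 1 + t + 1)),
            hchain D T (m+1) t s s' u u' * T (m + 1 + t + 1) u u' b d from rfl]
    rw [show m + 1 + t + 1 = m + (t+1) + 1 by ring, Finset.mul_sum]
    refine Finset.sum_congr rfl fun u _ => ?_
    rw [Finset.mul_sum]
    refine Finset.sum_congr rfl fun u' _ => ?_
    ring

section main

variable (N n : ℕ) (R I : ℕ → ℕ) (G : ℕ → ℕ → ℕ → ℕ → ℝ)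

/-- The transfer tensor of core `(n+1+m) % N`. -/
def Tcore (m : ℕ) : ℕ → ℕ → ℕ → ℕ → ℝ :=
  fun s s' b d => ∑ i ∈ Finset.range (I ((n + 1 + m) % N)),
    G ((n + 1 + m) % N) s i b * G ((n + 1 + m) % N) s' i d

/-- Lemma A: the Gram of the head subchain equals the left-associated transfer chain. -/
lemma gram_head (t : ℕ) : ∀ a c b d,
    (∑ p ∈ Finset.range (∏ k ∈ Finset.range (t + 1), I ((n + 1 + k) % N)),
        subChain (fun k => I ((n + 1 + k) % N)) (fun k => R ((n + 1 + k) % N))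
            (fun k => G ((n + 1 + k) % N)) t a p b *
          subChain (fun k => I ((n + 1 + k) % N)) (fun k => R ((n + 1 + k) % N))
            (fun k => G ((n + 1 + k) % N)) t c p d)
      = hchain (fun k => R ((n + 1 + k) % N)) (Tcore N n I G) 0 t a c b d := by
  set J : ℕ → ℕ := fun k => I ((n + 1 + k) % N) with hJ
  set L : ℕ → ℕ := fun k => R ((n + 1 + k) % N) with hL
  set A : ℕ → ℕ → ℕ → ℕ → ℝ := fun k => G ((n + 1 + k) % N) with hA
  induction t with
  | zero =>
    intro a c b d
    simp [subChain, hchain, Tcore, hJ, hA]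
  | succ t ih =>
    intro a c b d
    rw [Finset.prod_range_succ, sum_range_mul']
    have hm : ∀ q ∈ Finset.range (J (t+1)),
        ∀ r ∈ Finset.range (∏ k ∈ Finset.range (t + 1), J k),
        subChain J L A (t+1) a (r + q * (∏ k ∈ Finset.range (t + 1), J k)) b *
          subChain J L A (t+1) c (r + q * (∏ k ∈ Finset.range (t + 1), J k)) d
        = (∑ s ∈ Finset.range (L (t+1)), subChain J L A t a r s * A (t+1) s q b) *
          (∑ s' ∈ Finset.range (L (t+1)), subChain J L A t c r s' * A (t+1) s' q d) := by
      intro q hq r hr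
      simp only [Finset.mem_range] at hr
      have hm0 : 0 < ∏ k ∈ Finset.range (t + 1), J k := by omega
      simp [subChain, sub2, Nat.add_mul_mod_self_right, Nat.mod_eq_of_lt hr,
        Nat.add_mul_div_right _ _ hm0, Nat.div_eq_of_lt hr]
    rw [Finset.sum_congr rfl fun q hq => Finset.sum_congr rfl fun r hr => hm q hq r hr]
    simp only [Finset.sum_mul_sum]
    rw [sum_swap4]
    rw [show hchain L (Tcore N n I G) 0 (t+1) a c b d
        = ∑ s ∈ Finset.range (L (0 + t + 1)), ∑ s' ∈ Finset.range (L (0 + t + 1)),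
            hchain L (Tcore N n I G) 0 t a c s s' * Tcore N n I G (0 + t + 1) s s' b d
        from rfl]
    simp only [Nat.zero_add]
    refine Finset.sum_congr rfl fun s _ => Finset.sum_congr rfl fun s' _ => ?_
    rw [← ih a c s s']
    rw [show Tcore N n I G (t+1) s s' b d
        = ∑ q ∈ Finset.range (J (t+1)), A (t+1) s q b * A (t+1) s' q d from rfl]
    rw [Finset.sum_mul_sum, Finset.sum_comm]
    refine Finset.sum_congr rfl fun q _ => Finset.sum_congr rfl fun r _ => ?_
    ring

variable (P : ℕ → ℕ → ℕ → ℕ → ℕ → ℝ)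

/-- Lemma B: the contracted chain equals a (shifted) transfer chain. -/
lemma gram_tail (hN : 3 ≤ N)
    (hP : ∀ j, j < N → ∀ w x y z,
      P j w x y z = ∑ i ∈ Finset.range (I j), G j x i w * G j z i y)
    (t : ℕ) (ht : t ≤ N - 2) : ∀ a c b d,
    conChain (fun k => R ((n + N - 1 - k) % N)) (fun k => R ((n + N - 1 - k) % N))
        (fun k => P ((n + N - 1 - k) % N)) t b a d c
      = hchain (fun k => R ((n + 1 + k) % N)) (Tcore N n I G) (N - 2 - t) t a c b d := by
  induction t with
  | zero =>
    intro a c b d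
    show P ((n + N - 1 - 0) % N) b a d c = _
    rw [hP _ (Nat.mod_lt _ (by omega))]
    rw [show n + N - 1 - 0 = n + 1 + (N - 2 - 0) by omega]
    rfl
  | succ t ih =>
    have ht' : t ≤ N - 2 := by omega
    intro a c b d
    show gcon (R ((n + N - 1 - t) % N)) (R ((n + N - 1 - t) % N)) _ _ b a d c = _
    rw [show N - 2 - (t + 1) = N - 3 - t by omega]
    rw [hchain_cons]
    rw [show N - 3 - t + 1 = N - 2 - t by omega]
    show (∑ j ∈ Finset.range (R ((n + N - 1 - t) % N)),
        ∑ k ∈ Finset.range (R ((n + N - 1 - t) % N)),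
          conChain _ _ _ t b j d k * P ((n + N - 1 - (t+1)) % N) j a k c) = _
    rw [show n + 1 + (N - 2 - t) = n + N - 1 - t by omega]
    refine Finset.sum_congr rfl fun j hj => Finset.sum_congr rfl fun k hk => ?_
    rw [ih ht' j k b d]
    rw [hP _ (Nat.mod_lt _ (by omega))]
    simp only [Tcore]
    rw [show n + 1 + (N - 3 - t) = n + N - 1 - (t + 1) by omega]
    ring

end main

/-- **Gram matrix of the subchain tensor** (TR-ALS-NE normal-equation coefficient).
Let `G j ∈ ℝ^{R j × I j × R ((j+1) % N)}` (`j = 0, …, N-1`, 0-based, so `R N = R 0`) be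
TR-cores, fix a mode `n < N`, and let
`G^{≠n} = G (n+1) ⊠₂ ⋯ ⊠₂ G (N-1) ⊠₂ G 0 ⊠₂ ⋯ ⊠₂ G (n-1)` (indices mod `N`).
With `P j = ∑_{i<I j} G j(i)ᵀ ∘ G j(i)ᵀ`, i.e. `P j (w,x,y,z) = ∑_i G j (x,i,w) G j (z,i,y)`,
and `S_n = P (n-1) ×_{2,4}^{1,3} ⋯ ×_{2,4}^{1,3} P (n+1)` (descending cyclically), the Gram
matrix of the mode-2 unfolding satisfies `(G^{≠n}_{[2]})ᵀ G^{≠n}_{[2]} = S_{n<2>}`: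
entrywise, the `(overline{b a}, overline{d c})` entry of the left side (columns of the
mode-2 unfolding indexed `overline{i₃ i₁}`, third mode fastest) equals `S_n (b, a, d, c)`. -/
theorem tr_subchain_gram (N : ℕ) (hN : 3 ≤ N) (n : ℕ) (hn : n < N) (R I : ℕ → ℕ)
    (G : ℕ → ℕ → ℕ → ℕ → ℝ) (P : ℕ → ℕ → ℕ → ℕ → ℕ → ℝ)
    (hP : ∀ j, j < N → ∀ w x y z,
      P j w x y z = ∑ i ∈ Finset.range (I j), G j x i w * G j z i y) :
    ∀ a c b d, a < R ((n + 1) % N) → c < R ((n + 1) % N) → b < R n → d < R n →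
      (∑ p ∈ Finset.range (∏ t ∈ Finset.range (N - 1), I ((n + 1 + t) % N)),
          subChain (fun t => I ((n + 1 + t) % N)) (fun t => R ((n + 1 + t) % N))
              (fun t => G ((n + 1 + t) % N)) (N - 2) a p b *
            subChain (fun t => I ((n + 1 + t) % N)) (fun t => R ((n + 1 + t) % N))
              (fun t => G ((n + 1 + t) % N)) (N - 2) c p d) =
        conChain (fun t => R ((n + N - 1 - t) % N)) (fun t => R ((n + N - 1 - t) % N))
          (fun t => P ((n + N - 1 - t) % N)) (N - 2) b a d c := by
  intro a c b d _ _ _ _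
  rw [show N - 1 = (N - 2) + 1 by omega]
  rw [gram_head N n R I G (N - 2) a c b d]
  rw [gram_tail N n R I G P hN hP (N - 2) le_rfl a c b d]
  rw [show N - 2 - (N - 2) = 0 by omega]
end
end
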